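/- arXiv:1810.09787 — 2 statements merged into one kernel-verified Lean document; each statement's English description precedes it below -/
import Mathlib

section
/- Every positive integer N has a unique representation N = Σ_{i=0}^{I} f_i · T(i+3), where T is the tribonacci sequence (T(0)=T(1)=0, T(2)=1, T(n)=T(n-1)+T(n-2)+T(n-3)), each f_i ∈ {0,1}, f_I = 1, and no three consecutive f_i, f_{i+1}, f_{i+2} are all 1. -/
/-!
Write `Σ s` for `∑ i ∈ s, T (i + 3)`. Since `T (k + 3) = T (k + 2) + T (k + 1) + T k`, the interval
`[0, T (k + 3))` splits into `[0, T (k + 2))`, `T (k + 2) + [0, T (k + 1))` and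
`T (k + 2) + T (k + 1) + [0, T k)`, matching the three ways a set without three consecutive
elements can end below `k`: without `k - 1`, with `k - 1` but not `k - 2`, or with both but not
`k - 3`. Induction along this splitting shows that `Σ s < T (k + 3)` for such `s ⊆ range k`, and
that every `N < T (k + 3)` is such a sum. For uniqueness, drop the common elements of two
representations of `N`: the largest remaining element `a` lies in only one of them, whose sum is
then at least `T (a + 3)`, more than the other one's.
-/

/-- The tribonacci sequence: T(0)=0, T(1)=0, T(2)=1, T(n)=T(n-1)+T(n-2)+T(n-3). -/
def T : ℕ → ℕ
  | 0 => 0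
  | 1 => 0
  | 2 => 1
  | (n+3) => T (n+2) + T (n+1) + T n

namespace Finset

theorem subset_range_of_notMem {s : Finset ℕ} {k : ℕ} (hs : s ⊆ range (k + 1)) (hk : k ∉ s) :
    s ⊆ range k := by
  rwa [range_add_one, subset_insert_iff_of_notMem hk] at hs

theorem erase_subset_range {s : Finset ℕ} {k : ℕ} (hs : s ⊆ range (k + 1)) :
    s.erase k ⊆ range k := by
  rwa [range_add_one, subset_insert_iff] at hs

end Finset

open Finset

theorem T_add_three (n : ℕ) : T (n + 3) = T (n + 2) + T (n + 1) + T n := rfl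

theorem T_add_two_pos : ∀ n, 0 < T (n + 2)
  | 0 => by decide
  | 1 => by decide
  | n + 2 => by
    show 0 < T (n + 3) + T (n + 2) + T (n + 1)
    have := T_add_two_pos n
    omega

theorem lt_T_add_three : ∀ n, n < T (n + 3)
  | 0 => by decide
  | n + 1 => by
    show n + 1 < T (n + 3) + T (n + 2) + T (n + 1)
    have := lt_T_add_three n
    have := T_add_two_pos n
    omega

def NoThreeConsecutive (s : Finset ℕ) : Prop :=
  ∀ i, ¬(i ∈ s ∧ i + 1 ∈ s ∧ i + 2 ∈ s)

namespace NoThreeConsecutive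

variable {s : Finset ℕ} {a : ℕ}

theorem subset {t : Finset ℕ} (ht : NoThreeConsecutive t) (h : s ⊆ t) : NoThreeConsecutive s :=
  fun i hi => ht i ⟨h hi.1, h hi.2.1, h hi.2.2⟩

theorem insert_of_forall_lt (hs : NoThreeConsecutive s) (ha : ∀ i ∈ s, i + 1 < a) :
    NoThreeConsecutive (insert a s) := by
  grind [NoThreeConsecutive]

theorem insert_insert_of_forall_lt (hs : NoThreeConsecutive s) (ha : ∀ i ∈ s, i + 1 < a) :
    NoThreeConsecutive (insert (a + 1) (insert a s)) := by
  grind [NoThreeConsecutive]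

end NoThreeConsecutive

theorem sum_T_lt_of_subset_range {s : Finset ℕ} {k : ℕ} (hs : NoThreeConsecutive s)
    (hk : s ⊆ range k) : ∑ i ∈ s, T (i + 3) < T (k + 3) := by
  induction k using Nat.strong_induction_on generalizing s with
  | _ k ih =>
  rcases lt_or_ge k 3 with hk3 | hk3
  · calc ∑ i ∈ s, T (i + 3) ≤ ∑ i ∈ range k, T (i + 3) := sum_le_sum_of_subset hk
      _ < T (k + 3) := by interval_cases k <;> decide
  obtain ⟨k, rfl⟩ := Nat.exists_eq_add_of_le' hk3
  rw [T_add_three]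
  by_cases h2 : k + 2 ∉ s
  · have := ih (k + 2) (by omega) hs (subset_range_of_notMem hk h2)
    simp only [add_assoc, Nat.reduceAdd] at this ⊢
    omega
  rw [not_not] at h2
  rw [← add_sum_erase s _ h2]
  have hk2 := erase_subset_range hk
  by_cases h1 : k + 1 ∉ s
  · have := ih (k + 1) (by omega) (hs.subset (erase_subset _ _))
      (subset_range_of_notMem hk2 fun h => h1 (mem_of_mem_erase h))
    simp only [add_assoc, Nat.reduceAdd] at this ⊢
    omega
  rw [not_not] at h1
  rw [← add_sum_erase _ _ (mem_erase.2 ⟨by omega, h1⟩)]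
  have h0 : k ∉ s := fun h0 => hs k ⟨h0, h1, h2⟩
  have := ih k (by omega) (hs.subset ((erase_subset _ _).trans (erase_subset _ _)))
    (subset_range_of_notMem (erase_subset_range hk2)
      fun h => h0 (mem_of_mem_erase (mem_of_mem_erase h)))
  simp only [add_assoc, Nat.reduceAdd] at this ⊢
  omega

theorem sum_T_sdiff_lt {s t : Finset ℕ} {a : ℕ} (ht : NoThreeConsecutive t) (ha : a ∈ s \ t)
    (hmax : ∀ i ∈ t \ s, i ≤ a) :
    ∑ i ∈ t \ s, T (i + 3) < ∑ i ∈ s \ t, T (i + 3) := by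
  have hsub : t \ s ⊆ range a := fun i hi =>
    mem_range.2 (lt_of_le_of_ne (hmax i hi) fun h => (mem_sdiff.1 hi).2 (h ▸ (mem_sdiff.1 ha).1))
  calc ∑ i ∈ t \ s, T (i + 3) < T (a + 3) := sum_T_lt_of_subset_range (ht.subset sdiff_subset) hsub
    _ ≤ ∑ i ∈ s \ t, T (i + 3) :=
      single_le_sum (f := fun i => T (i + 3)) (fun _ _ => Nat.zero_le _) ha

theorem eq_of_sum_T_eq {s t : Finset ℕ} (hs : NoThreeConsecutive s) (ht : NoThreeConsecutive t)
    (h : ∑ i ∈ s, T (i + 3) = ∑ i ∈ t, T (i + 3)) : s = t := by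
  by_contra hne
  have hsdiff : (s \ t ∪ t \ s).Nonempty := by
    rw [nonempty_iff_ne_empty, Ne, union_eq_empty, sdiff_eq_empty_iff_subset,
      sdiff_eq_empty_iff_subset]
    exact fun h => hne (subset_antisymm h.1 h.2)
  obtain ⟨a, ha, hmax⟩ := (s \ t ∪ t \ s).exists_max_image id hsdiff
  rw [← sum_sdiff_eq_sum_sdiff_iff] at h
  rcases mem_union.1 ha with ha | ha
  · exact (sum_T_sdiff_lt ht ha fun i hi => hmax i (mem_union_right _ hi)).ne' h
  · exact (sum_T_sdiff_lt hs ha fun i hi => hmax i (mem_union_left _ hi)).ne h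

theorem exists_sum_T_eq_of_lt {m N : ℕ} (hN : N < T m) :
    ∃ s : Finset ℕ, NoThreeConsecutive s ∧ (∀ i ∈ s, i + 3 < m) ∧ ∑ i ∈ s, T (i + 3) = N := by
  induction m using Nat.strong_induction_on generalizing N with
  | _ m ih =>
  rcases lt_or_ge m 3 with hm3 | hm3
  · refine ⟨∅, fun i => by simp, by simp, ?_⟩
    rw [sum_empty]
    interval_cases m <;> simp only [T] at hN <;> omega
  obtain ⟨m, rfl⟩ := Nat.exists_eq_add_of_le' hm3
  rw [T_add_three] at hN
  by_cases h2 : N < T (m + 2)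
  · obtain ⟨s, hs, hlt, hsum⟩ := ih (m + 2) (by omega) h2
    exact ⟨s, hs, fun i hi => by have := hlt i hi; omega, hsum⟩
  by_cases h1 : N < T (m + 2) + T (m + 1)
  · obtain _ | m := m
    · simp only [T] at h2 hN
      omega
    simp only [add_assoc, Nat.reduceAdd] at h1 h2 hN ⊢
    obtain ⟨s, hs, hlt, hsum⟩ := ih (m + 2) (by omega) (N := N - T (m + 3)) (by omega)
    refine ⟨insert m s, hs.insert_of_forall_lt fun i hi => by have := hlt i hi; omega, ?_, ?_⟩
    · simp only [mem_insert, forall_eq_or_imp]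
      exact ⟨by omega, fun i hi => by have := hlt i hi; omega⟩
    · rw [sum_insert fun h => by have := hlt m h; omega, hsum]
      omega
  · obtain _ | _ | m := m
    · simp only [T] at h1 hN
      omega
    · simp only [T] at h1 hN
      omega
    simp only [add_assoc, Nat.reduceAdd] at h1 h2 hN ⊢
    obtain ⟨s, hs, hlt, hsum⟩ :=
      ih (m + 2) (by omega) (N := N - T (m + 4) - T (m + 3)) (by omega)
    refine ⟨insert (m + 1) (insert m s),
      hs.insert_insert_of_forall_lt fun i hi => by have := hlt i hi; omega, ?_, ?_⟩
    · simp only [mem_insert, forall_eq_or_imp]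
      exact ⟨by omega, by omega, fun i hi => by have := hlt i hi; omega⟩
    · rw [sum_insert (by grind), sum_insert fun h => by have := hlt m h; omega, hsum]
      simp only [add_assoc, Nat.reduceAdd]
      omega

theorem tribonacci_representation_unique_general (N : ℕ) :
    ∃! s : Finset ℕ,
      N = ∑ i ∈ s, T (i + 3) ∧ ∀ i, ¬(i ∈ s ∧ i + 1 ∈ s ∧ i + 2 ∈ s) := by
  obtain ⟨s, hs, -, hsum⟩ := exists_sum_T_eq_of_lt (lt_T_add_three N)
  refine ⟨s, ⟨hsum.symm, hs⟩, fun t ⟨htsum, ht⟩ => ?_⟩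
  exact eq_of_sum_T_eq ht hs (htsum.symm.trans hsum.symm)

/-- Every positive integer has a unique tribonacci (Zeckendorf-type) representation:
a unique finite set of indices `s` (the indices `i` with digit `f_i = 1`) with
`N = ∑ i ∈ s, T (i+3)` and no three consecutive indices all in `s`. -/
theorem tribonacci_representation_unique (N : ℕ) (hN : 0 < N) :
    ∃! s : Finset ℕ,
      N = ∑ i ∈ s, T (i + 3) ∧ ∀ i, ¬(i ∈ s ∧ i + 1 ∈ s ∧ i + 2 ∈ s) :=
  tribonacci_representation_unique_general N
end

section
/- With t the infinite tribonacci word, A(n) the position of the (n+1)-st occurrence of 1 in t, and z(n) = Σ_{j=0}^{n} t(j) (with z(-1)=0), one has A(n) = 4n + 1 − z(n−1) for all n ≥ 0. -/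
/-!
Since `t` is the fixed point of `σ`, applying `σ` to the prefix `t₀ ⋯ t_{k-1}` gives the prefix
of `t` of length `s(k) = |σ(t₀ ⋯ t_{k-1})|`, and `t (s k) t (s k + 1) ⋯` starts with `σ(t k)`.
Each `σ(x)` contains exactly one `0`, contains a `1` iff `x = 0`, a `2` iff `x = 1`, and has
length `2` unless `x = 2`. So `σ²` puts exactly one `1` into the image of each letter: the prefix of
length `s(s(n))` contains `n` ones and is followed by `0 1`, whence `A(n) = s(s(n)) + 1`.
With `s(m) = 2m - #{j < m : t j = 2}` and `#{j < s(n) : t j = 2} = #{j < n : t j = 1}` this is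
`A(n) = 4n + 1 - #{j < n : t j = 1} - 2 #{j < n : t j = 2} = 4n + 1 - z(n-1)`.
-/

/-- The tribonacci substitution on letters: 0 ↦ 01, 1 ↦ 02, 2 ↦ 0. -/
def sigmaW : ℕ → List ℕ
  | 0 => [0, 1]
  | 1 => [0, 2]
  | _ => [0]

/-- The substitution extended to words (concatenation homomorphism). -/
def sigmaL (w : List ℕ) : List ℕ := w.flatMap sigmaW

/-- The infinite tribonacci word t = 0,1,0,2,0,1,0,0,1,0,2,...,
the fixed point of the substitution starting from 0. -/
def t (n : ℕ) : ℕ := (sigmaL^[n + 1] [0]).getD n 0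

/-- A(n): position of the (n+1)-st occurrence of the letter 1 in t. -/
noncomputable def A (n : ℕ) : ℕ := Nat.nth (fun k => t k = 1) n

/-- B(n): position of the (n+1)-st occurrence of the letter 0 in t. -/
noncomputable def B (n : ℕ) : ℕ := Nat.nth (fun k => t k = 0) n

/-- C(n): position of the (n+1)-st occurrence of the letter 2 in t. -/
noncomputable def C (n : ℕ) : ℕ := Nat.nth (fun k => t k = 2) n

section Substitution

lemma sigmaL_cons (a : ℕ) (w : List ℕ) : sigmaL (a :: w) = sigmaW a ++ sigmaL w :=
  List.flatMap_cons

lemma sigmaL_append (u v : List ℕ) : sigmaL (u ++ v) = sigmaL u ++ sigmaL v :=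
  List.flatMap_append

lemma sigmaL_singleton (a : ℕ) : sigmaL [a] = sigmaW a := by
  simp [sigmaL]

lemma List.IsPrefix.sigmaL {u v : List ℕ} (h : u <+: v) : _root_.sigmaL u <+: _root_.sigmaL v :=
  h.flatMap sigmaW

lemma le_two_of_mem_sigmaL {w : List ℕ} {x : ℕ} (hx : x ∈ sigmaL w) : x ≤ 2 := by
  obtain ⟨a, -, hxa⟩ := List.mem_flatMap.mp hx
  rcases a with _ | _ | a <;> simp [sigmaW] at hxa <;> omega

lemma count_zero_sigmaL (w : List ℕ) : (sigmaL w).count 0 = w.length := by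
  induction w with
  | nil => rfl
  | cons a w ih => rcases a with _ | _ | a <;> simp [sigmaL_cons, sigmaW, ih]

lemma count_one_sigmaL (w : List ℕ) : (sigmaL w).count 1 = w.count 0 := by
  induction w with
  | nil => rfl
  | cons a w ih => rcases a with _ | _ | a <;> simp [sigmaL_cons, sigmaW, ih]

lemma count_two_sigmaL (w : List ℕ) : (sigmaL w).count 2 = w.count 1 := by
  induction w with
  | nil => rfl
  | cons a w ih =>
    rcases a with _ | _ | _ | a <;> simp [sigmaL_cons, sigmaW, ih]

lemma length_sigmaL_add_count_two {w : List ℕ} (hw : ∀ x ∈ w, x ≤ 2) :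
    (sigmaL w).length + w.count 2 = 2 * w.length := by
  induction w with
  | nil => rfl
  | cons a w ih =>
    have ha : a ≤ 2 := hw a List.mem_cons_self
    have := ih fun x hx => hw x (List.mem_cons_of_mem a hx)
    interval_cases a <;> simp [sigmaL_cons, sigmaW] <;> omega

end Substitution

section Iterates

def sigmaIter (m : ℕ) : List ℕ := sigmaL^[m] [0]

lemma sigmaIter_succ (m : ℕ) : sigmaIter (m + 1) = sigmaL (sigmaIter m) :=
  Function.iterate_succ_apply' _ _ _

lemma t_eq_getD_sigmaIter (n : ℕ) : t n = (sigmaIter (n + 1)).getD n 0 := rfl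

lemma le_two_of_mem_sigmaIter {m x : ℕ} (hx : x ∈ sigmaIter m) : x ≤ 2 := by
  cases m with
  | zero => simp [sigmaIter] at hx; omega
  | succ m => exact le_two_of_mem_sigmaL (sigmaIter_succ m ▸ hx)

lemma sigmaIter_prefix_succ (m : ℕ) : sigmaIter m <+: sigmaIter (m + 1) := by
  induction m with
  | zero => exact ⟨[1], rfl⟩
  | succ m ih => simpa only [sigmaIter_succ m, sigmaIter_succ (m + 1)] using ih.sigmaL

lemma sigmaIter_prefix {m m' : ℕ} (h : m ≤ m') : sigmaIter m <+: sigmaIter m' := by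
  induction m', h using Nat.le_induction with
  | base => exact List.prefix_rfl
  | succ m' _ ih => exact ih.trans (sigmaIter_prefix_succ m')

lemma zero_mem_sigmaIter (m : ℕ) : 0 ∈ sigmaIter m :=
  (sigmaIter_prefix (Nat.zero_le m)).subset List.mem_cons_self

lemma lt_length_sigmaIter (m : ℕ) : m < (sigmaIter m).length := by
  induction m with
  | zero => simp [sigmaIter]
  | succ m ih =>
    have hlen := length_sigmaL_add_count_two fun _ => le_two_of_mem_sigmaIter (m := m)
    have hcount : (sigmaIter m).count 2 < (sigmaIter m).length :=
      List.count_lt_length_iff.mpr ⟨0, zero_mem_sigmaIter m, by decide⟩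
    rw [sigmaIter_succ]
    omega

lemma getElem_sigmaIter {m i : ℕ} (hi : i < (sigmaIter m).length) : (sigmaIter m)[i] = t i := by
  have hi' : i < (sigmaIter (i + 1)).length := (lt_length_sigmaIter (i + 1)).trans' i.lt_succ_self
  rw [t_eq_getD_sigmaIter, List.getD_eq_getElem _ _ hi']
  rcases le_total m (i + 1) with h | h
  · exact (sigmaIter_prefix h).getElem hi
  · exact ((sigmaIter_prefix h).getElem hi').symm

lemma t_le_two (n : ℕ) : t n ≤ 2 := by
  have hn : n < (sigmaIter (n + 1)).length := (lt_length_sigmaIter (n + 1)).trans' n.lt_succ_self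
  rw [← getElem_sigmaIter hn]
  exact le_two_of_mem_sigmaIter (List.getElem_mem hn)

end Iterates

section FixedPoint

def tPrefix (n : ℕ) : List ℕ := (List.range n).map t

/-- The position where the image `σ(t k)` of the `k`-th letter starts in `t = σ(t)`. -/
def blockStart (k : ℕ) : ℕ := (sigmaL (tPrefix k)).length

@[simp]
lemma length_tPrefix (n : ℕ) : (tPrefix n).length = n := by
  simp [tPrefix]

@[simp]
lemma getElem_tPrefix {n i : ℕ} (hi : i < (tPrefix n).length) : (tPrefix n)[i] = t i := by
  simp [tPrefix]

lemma tPrefix_succ (n : ℕ) : tPrefix (n + 1) = tPrefix n ++ [t n] := by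
  simp [tPrefix, List.range_succ]

lemma le_two_of_mem_tPrefix {n x : ℕ} (hx : x ∈ tPrefix n) : x ≤ 2 := by
  obtain ⟨i, -, rfl⟩ := List.mem_map.mp hx
  exact t_le_two i

lemma eq_tPrefix_of_prefix_sigmaIter {u : List ℕ} {m : ℕ} (h : u <+: sigmaIter m) :
    u = tPrefix u.length :=
  List.ext_getElem (by simp) fun i hu _ => by
    rw [h.getElem hu, getElem_sigmaIter, getElem_tPrefix]

lemma tPrefix_prefix_sigmaIter (k : ℕ) : tPrefix k <+: sigmaIter k := by
  have htake := List.take_prefix k (sigmaIter k)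
  rwa [eq_tPrefix_of_prefix_sigmaIter htake, List.length_take,
    min_eq_left (lt_length_sigmaIter k).le] at htake

lemma sigmaL_tPrefix (k : ℕ) : sigmaL (tPrefix k) = tPrefix (blockStart k) :=
  eq_tPrefix_of_prefix_sigmaIter (sigmaIter_succ k ▸ (tPrefix_prefix_sigmaIter k).sigmaL)

lemma t_blockStart_add {k i : ℕ} (hi : i < (sigmaW (t k)).length) :
    t (blockStart k + i) = (sigmaW (t k))[i] := by
  have hblock : tPrefix (blockStart (k + 1)) = tPrefix (blockStart k) ++ sigmaW (t k) := by
    rw [← sigmaL_tPrefix, ← sigmaL_tPrefix, tPrefix_succ, sigmaL_append, sigmaL_singleton]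
  have hlt : blockStart k + i < (tPrefix (blockStart (k + 1))).length := by
    rw [hblock, List.length_append, length_tPrefix]
    omega
  rw [← getElem_tPrefix hlt]
  simp only [hblock, List.getElem_append_right, length_tPrefix, Nat.le_add_right,
    Nat.add_sub_cancel_left]

lemma t_blockStart (k : ℕ) : t (blockStart k) = 0 := by
  have h0 : 0 < (sigmaW (t k)).length := by rcases t k with _ | _ | _ <;> simp [sigmaW]
  have := t_blockStart_add h0
  rcases hk : t k with _ | _ | _ <;> simp_all [sigmaW]

lemma t_blockStart_add_one {k : ℕ} (hk : t k = 0) : t (blockStart k + 1) = 1 := by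
  have h1 : 1 < (sigmaW (t k)).length := by simp [hk, sigmaW]
  simpa [hk, sigmaW] using t_blockStart_add h1

lemma blockStart_add_count_two (k : ℕ) : blockStart k + (tPrefix k).count 2 = 2 * k := by
  have := length_sigmaL_add_count_two fun _ => le_two_of_mem_tPrefix (n := k)
  rwa [length_tPrefix] at this

end FixedPoint

lemma count_eq_count_tPrefix (a n : ℕ) : Nat.count (fun k => t k = a) n = (tPrefix n).count a := by
  induction n with
  | zero => rfl
  | succ n ih => by_cases h : t n = a <;> simp [Nat.count_succ, tPrefix_succ, ih, h]

lemma sum_range_t (n : ℕ) :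
    ∑ j ∈ Finset.range n, t j = (tPrefix n).count 1 + 2 * (tPrefix n).count 2 := by
  induction n with
  | zero => rfl
  | succ n ih =>
    have hn := t_le_two n
    rw [Finset.sum_range_succ, ih, tPrefix_succ]
    interval_cases h : t n <;> simp <;> ring

lemma A_eq_blockStart_blockStart (n : ℕ) : A n = blockStart (blockStart n) + 1 := by
  have hcount : Nat.count (fun k => t k = 1) (blockStart (blockStart n) + 1) = n := by
    rw [count_eq_count_tPrefix, tPrefix_succ, List.count_append, t_blockStart, ← sigmaL_tPrefix,
      count_one_sigmaL, ← sigmaL_tPrefix, count_zero_sigmaL, length_tPrefix]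
    rfl
  have h := Nat.nth_count (p := fun k => t k = 1) (t_blockStart_add_one (t_blockStart n))
  rwa [hcount] at h

/-- A(n) = 4n + 1 − z(n−1), where z(n) = Σ_{j=0}^{n} t(j) and z(−1)=0. -/
theorem A_formula (n : ℕ) :
    (A n : ℤ) = 4 * n + 1 - ∑ j ∈ Finset.range n, (t j : ℤ) := by
  have h₁ := blockStart_add_count_two n
  have h₂ := blockStart_add_count_two (blockStart n)
  rw [← sigmaL_tPrefix, count_two_sigmaL] at h₂
  rw [A_eq_blockStart_blockStart, ← Nat.cast_sum, sum_range_t]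
  push_cast
  omega
end
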